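/- (On the failure of the hidden assumption.) Let f ∈ Γ(X) with A ∩ dom f = ∅ and let x* ∈ X*. Then the following are equivalent: (i) epi (f + δ_A)* ∩ ({x*}×ℝ) ≠ w*-cl(epi f* + K) ∩ ({x*}×ℝ); (ii) {x*}×ℝ is not contained in w*-cl(epi f* + K); (iii) x* ∉ w*-cl(dom f* + cone Ω + barr C); (iv) there exists d ∈ ⋂_{i∈I} [f_i^∞ ≤ 0] ∩ C^∞ such that f^∞(d) < ⟨x*, d⟩. -/

import Mathlib

open Pointwise

noncomputable section

variable {X : Type*} [AddCommGroup X] [Module ℝ X] [TopologicalSpace X]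

/-- Fenchel conjugate, as a function on the weak-* dual. -/
def conjFn (h : X → EReal) : WeakDual ℝ X → EReal :=
  fun p => ⨆ x : X, (p x : EReal) - h x

/-- Epigraph of an extended-real-valued function. -/
def epiFn {V : Type*} (h : V → EReal) : Set (V × ℝ) :=
  {q | h q.1 ≤ (q.2 : EReal)}

/-- Graph of an extended-real-valued function (where it is finite). -/
def gphFn {V : Type*} (h : V → EReal) : Set (V × ℝ) :=
  {q | h q.1 = (q.2 : EReal)}

/-- Effective domain. -/
def domFn {V : Type*} (h : V → EReal) : Set V :=
  {x | h x < ⊤}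

open Classical in
/-- Indicator function of a set. -/
def indicatorE {V : Type*} (D : Set V) : V → EReal :=
  fun x => if x ∈ D then (0 : EReal) else ⊤

/-- Convex cone generated by `D ∪ {0}`. -/
def coneGen {V : Type*} [AddCommGroup V] [Module ℝ V] (D : Set V) : Set V :=
  {0} ∪ {y | ∃ t : ℝ, 0 ≤ t ∧ ∃ x ∈ convexHull ℝ D, y = t • x}

/-- `h ∈ Γ(X)`: proper, convex and lower semicontinuous. -/
def InGamma (h : X → EReal) : Prop :=
  (∀ x, h x ≠ ⊥) ∧ (∃ x, h x ≠ ⊤) ∧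
    Convex ℝ {q : X × ℝ | h q.1 ≤ (q.2 : EReal)} ∧ LowerSemicontinuous h

/-- Solution set `A` of the system `σ = {f i x ≤ 0, i ∈ I; x ∈ C}`. -/
def solSet {I : Type*} (C : Set X) (f : I → X → EReal) : Set X :=
  {x | x ∈ C ∧ ∀ i, f i x ≤ (0 : EReal)}

/-- Characteristic cone `K = cone (epi δ_C* ∪ ⋃ i, epi f_i*)` of the system. -/
def charCone {I : Type*} (C : Set X) (f : I → X → EReal) : Set (WeakDual ℝ X × ℝ) :=
  coneGen (epiFn (conjFn (indicatorE C)) ∪ ⋃ i, epiFn (conjFn (f i)))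

/-- Barrier cone `barr C = dom δ_C*`. -/
def barCone (C : Set X) : Set (WeakDual ℝ X) :=
  domFn (conjFn (indicatorE C))

/-- The Farkas–Minkowski constraint qualification. -/
def IsFM {I : Type*} (C : Set X) (f : I → X → EReal) : Prop :=
  (solSet C f).Nonempty ∧ IsClosed (charCone C f)

/-- Recession function `h^∞ = δ*_{dom h*}`. -/
def recFn (h : X → EReal) : X → EReal :=
  fun x => ⨆ q ∈ domFn (conjFn h), ((q x : ℝ) : EReal)

/-- Recession cone `D^∞ = ⋂_{t>0} t (D - a)`, for any `a ∈ D`. -/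
def recCone (D : Set X) : Set X :=
  {d | ∀ a ∈ D, ∀ t : ℝ, 0 < t → d ∈ t • (D - ({a} : Set X))}

/-- Subdifferential of `h` at `a`. -/
def subdiff (h : X → EReal) (a : X) : Set (WeakDual ℝ X) :=
  {p | (∃ r : ℝ, h a = (r : EReal)) ∧ ∀ x, h a + ((p (x - a) : ℝ) : EReal) ≤ h x}


/-!
Write `g` for the paper's `f` and `W = w*-cl (epi g* + K)`. Since `A ∩ dom g = ∅`, the function
`g + δ_A` is identically `+∞`, so the epigraph of its conjugate is all of `X* × ℝ` and (i) ⇔ (ii).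

The heart of the matter is that `W` is a union of vertical lines. It is stable under adding `K`,
which contains `{0} × [0, ∞)`, so a point missing below a point of `W` can be separated from `W`
by a non-vertical hyperplane. Weak* continuous functionals are evaluations at points of `X`, so
the hyperplane is given by some `x ∈ X`, and Fenchel–Moreau for `g` and the `f i`, together with
Hahn–Banach for `C`, put `x` into `A ∩ dom g`. Hence `W` contains `{x*} × ℝ` for every `x*` in
the weak* closure of `dom g* + cone Ω + barr C`, a subset of the projection of `epi g* + K`:
this is (ii) ⇒ (iii). For (iii) ⇒ (iv), separate `x*` from that closure by a point `d ∈ X`; the cone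
parts force `d` into every `[f i^∞ ≤ 0]` and into `C^∞`. For (iv) ⇒ (ii), every `(y*, r) ∈ W`
satisfies `⟨y*, d⟩ ≤ g^∞ d < ⟨x*, d⟩`.
-/

open Set

instance WeakDual.instLocallyConvexSpace : LocallyConvexSpace ℝ (WeakDual ℝ X) :=
  WeakBilin.locallyConvexSpace (B := topDualPairing ℝ X)

theorem WeakDual.exists_eq_apply (φ : WeakDual ℝ X →L[ℝ] ℝ) :
    ∃ x : X, ∀ q : WeakDual ℝ X, φ q = q x := by
  obtain ⟨x, hx⟩ := LinearMap.dualEmbedding_surjective (topDualPairing ℝ X) φ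
  exact ⟨x, fun q => by rw [← hx]; rfl⟩

lemma nonpos_of_forall_nat_lt {a b u : ℝ} (h : ∀ n : ℕ, a + n * b < u) : b ≤ 0 := by
  by_contra! hb
  obtain ⟨n, hn⟩ := exists_nat_gt ((u - a) / b)
  linarith [h n, (div_lt_iff₀ hb).1 hn]

section Cones

variable {V V' : Type*} [AddCommGroup V] [Module ℝ V] [AddCommGroup V'] [Module ℝ V'] {D : Set V}

lemma zero_mem_coneGen (D : Set V) : (0 : V) ∈ coneGen D := Or.inl rfl

lemma subset_coneGen (D : Set V) : D ⊆ coneGen D := fun x hx =>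
  Or.inr ⟨1, zero_le_one, x, subset_convexHull ℝ D hx, (one_smul ℝ x).symm⟩

lemma coneGen_mono {D' : Set V} (h : D ⊆ D') : coneGen D ⊆ coneGen D' := by
  rintro _ (h0 | ⟨t, ht, x, hx, rfl⟩)
  · exact Or.inl h0
  · exact Or.inr ⟨t, ht, x, convexHull_mono h hx, rfl⟩

lemma smul_mem_coneGen {t : ℝ} (ht : 0 ≤ t) {x : V} (hx : x ∈ coneGen D) :
    t • x ∈ coneGen D := by
  rcases hx with rfl | ⟨s, hs, y, hy, rfl⟩
  · rw [smul_zero]; exact zero_mem_coneGen D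
  · exact Or.inr ⟨t * s, mul_nonneg ht hs, y, hy, smul_smul t s y⟩

lemma add_mem_coneGen {x y : V} (hx : x ∈ coneGen D) (hy : y ∈ coneGen D) :
    x + y ∈ coneGen D := by
  rcases hx with rfl | ⟨t, ht, x, hx, rfl⟩
  · rwa [zero_add]
  rcases hy with rfl | ⟨s, hs, y, hy, rfl⟩
  · rw [add_zero]; exact Or.inr ⟨t, ht, x, hx, rfl⟩
  have : t • x + s • y ∈ (t + s) • convexHull ℝ D := by
    rw [(convex_convexHull ℝ D).add_smul ht hs]
    exact add_mem_add (smul_mem_smul_set hx) (smul_mem_smul_set hy)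
  obtain ⟨z, hz, hzxy⟩ := this
  exact Or.inr ⟨t + s, add_nonneg ht hs, z, hz, hzxy.symm⟩

lemma convex_coneGen (D : Set V) : Convex ℝ (coneGen D) := fun _ hx _ hy _ _ ha hb _ =>
  add_mem_coneGen (smul_mem_coneGen ha hx) (smul_mem_coneGen hb hy)

lemma coneGen_subset {S : Set V} (hS : Convex ℝ S) (h0 : (0 : V) ∈ S)
    (hsmul : ∀ t : ℝ, 0 ≤ t → ∀ x ∈ S, t • x ∈ S) (hD : D ⊆ S) : coneGen D ⊆ S := by
  rintro _ (rfl | ⟨t, ht, x, hx, rfl⟩)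
  · exact h0
  · exact hsmul t ht x (convexHull_min hD hS hx)

lemma coneGen_image_subset (L : V →ₗ[ℝ] V') (D : Set V) : coneGen (L '' D) ⊆ L '' coneGen D := by
  rintro _ (rfl | ⟨t, ht, y, hy, rfl⟩)
  · exact ⟨0, zero_mem_coneGen D, map_zero L⟩
  · rw [← L.image_convexHull] at hy
    obtain ⟨x, hx, rfl⟩ := hy
    exact ⟨t • x, Or.inr ⟨t, ht, x, hx, rfl⟩, map_smul L t x⟩

lemma mem_recCone_iff_add_smul_mem {C : Set V} {d : V} :
    d ∈ recCone C ↔ ∀ a ∈ C, ∀ s : ℝ, 0 ≤ s → a + s • d ∈ C := by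
  have key : ∀ a, ∀ t : ℝ, 0 < t → (d ∈ t • (C - {a}) ↔ a + t⁻¹ • d ∈ C) := fun a t ht => by
    rw [mem_smul_set_iff_inv_smul_mem₀ ht.ne', sub_singleton, mem_image]
    exact ⟨fun ⟨y, hy, hyd⟩ => by rwa [← hyd, add_sub_cancel],
      fun h' => ⟨_, h', add_sub_cancel_left _ _⟩⟩
  refine forall₂_congr fun a ha => ⟨fun H s hs => ?_, fun H t ht => ?_⟩
  · rcases hs.lt_or_eq with hs | rfl
    · simpa using (key a s⁻¹ (inv_pos.2 hs)).1 (H _ (inv_pos.2 hs))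
    · simpa using ha
  · exact (key a t ht).2 (H _ (inv_nonneg.2 ht.le))

end Cones

section Epigraph

variable {V : Type*}

lemma mem_domFn_iff {h : V → EReal} {v : V} : v ∈ domFn h ↔ ∃ s : ℝ, h v ≤ s := by
  refine ⟨fun hv => ?_, fun ⟨s, hs⟩ => hs.trans_lt (EReal.coe_lt_top s)⟩
  obtain ⟨s, hs, -⟩ := EReal.lt_iff_exists_real_btwn.1 hv
  exact ⟨s, hs.le⟩

lemma image_fst_epiFn (h : V → EReal) : Prod.fst '' epiFn h = domFn h := by
  ext v
  simp only [mem_image, Prod.exists, exists_and_right, exists_eq_right, mem_domFn_iff]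
  rfl

lemma isClosed_epiFn [TopologicalSpace V] {h : V → EReal} (hh : LowerSemicontinuous h) :
    IsClosed (epiFn h) :=
  (lowerSemicontinuous_iff_isClosed_epigraph.1 hh).preimage
    (continuous_fst.prodMk (continuous_coe_real_ereal.comp continuous_snd))

lemma add_indicatorE_eq_top {g : V → EReal} {A : Set V} (hg : ∀ x, g x ≠ ⊥)
    (hA : A ∩ domFn g = ∅) (x : V) : g x + indicatorE A x = ⊤ := by
  by_cases hx : x ∈ A
  · have hgx : g x = ⊤ :=
      not_lt_top_iff.1 fun hgx => (eq_empty_iff_forall_notMem.1 hA x) ⟨hx, hgx⟩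
    simp [indicatorE, hx, hgx]
  · simpa [indicatorE, hx] using EReal.add_top_of_ne_bot (hg x)

def IsEpigraphical (W : Set (V × ℝ)) : Prop :=
  ∀ v (s t : ℝ), (v, s) ∈ W → s ≤ t → (v, t) ∈ W

lemma isEpigraphical_epiFn (h : V → EReal) : IsEpigraphical (epiFn h) :=
  fun _ _ _ hs hst => hs.trans (EReal.coe_le_coe_iff.2 hst)

end Epigraph

section Separation

variable {E : Type*} [AddCommGroup E] [Module ℝ E] [TopologicalSpace E]
  [IsTopologicalAddGroup E] [ContinuousSMul ℝ E] [LocallyConvexSpace ℝ E] {W : Set (E × ℝ)}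

theorem IsEpigraphical.exists_separation (hW : IsEpigraphical W) (hWc : Convex ℝ W)
    (hWcl : IsClosed W) (hne : W.Nonempty) {e₀ : E} {s₀ : ℝ} (h₀ : (e₀, s₀) ∉ W) :
    ∃ (φ : E →L[ℝ] ℝ) (c u : ℝ), 0 ≤ c ∧ (∀ z ∈ W, φ z.1 - c * z.2 < u) ∧
      u < φ e₀ - c * s₀ := by
  obtain ⟨F, u, hFW, hF₀⟩ := geometric_hahn_banach_closed_point hWc hWcl h₀
  have hF : ∀ z : E × ℝ, F z = F (z.1, 0) - (-F (0, 1)) * z.2 := fun z => by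
    conv_lhs => rw [show z = (z.1, 0) + z.2 • ((0 : E), (1 : ℝ)) by simp]
    rw [map_add, map_smul, smul_eq_mul]
    ring
  refine ⟨F.comp (.inl ℝ E ℝ), -F (0, 1), u, ?_, fun z hz => hF z ▸ hFW z hz, hF (e₀, s₀) ▸ hF₀⟩
  obtain ⟨⟨e, s⟩, hz⟩ := hne
  refine neg_nonneg.2 (nonpos_of_forall_nat_lt (a := F (e, s)) (u := u) fun n => ?_)
  have := hFW _ (hW e s (s + n) hz (by simp))
  rwa [show ((e, s + n) : E × ℝ) = (e, s) + (n : ℝ) • ((0 : E), (1 : ℝ)) by simp, map_add,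
    map_smul, smul_eq_mul] at this

theorem IsEpigraphical.exists_nonvertical_separation (hW : IsEpigraphical W)
    (hWc : Convex ℝ W) (hWcl : IsClosed W) {e₀ : E} {s₀ s₁ : ℝ} (h₁ : (e₀, s₁) ∈ W)
    (h₀ : (e₀, s₀) ∉ W) :
    ∃ (φ : E →L[ℝ] ℝ) (u : ℝ), (∀ z ∈ W, φ z.1 - z.2 < u) ∧ u < φ e₀ - s₀ := by
  obtain ⟨φ, c, u, hc, hφW, hφ₀⟩ := hW.exists_separation hWc hWcl ⟨_, h₁⟩ h₀
  have hc : 0 < c := hc.lt_of_ne' fun hc0 => by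
    have := hφW _ h₁
    simp only [hc0, zero_mul, sub_zero] at this hφ₀
    linarith
  refine ⟨c⁻¹ • φ, c⁻¹ * u, fun z hz => ?_, ?_⟩
  · have := hφW z hz
    rw [smul_apply, smul_eq_mul, ← mul_lt_mul_iff_of_pos_left hc]
    field_simp
    linarith
  · rw [smul_apply, smul_eq_mul, ← mul_lt_mul_iff_of_pos_left hc]
    field_simp
    linarith

end Separation

section Conjugate

variable {h : X → EReal}

lemma conjFn_le_coe_iff {q : WeakDual ℝ X} {s : ℝ} :
    conjFn h q ≤ s ↔ ∀ x (t : ℝ), h x ≤ t → q x ≤ s + t := by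
  refine iSup_le_iff.trans (forall_congr' fun x => ?_)
  generalize h x = v
  induction v with
  | bot =>
    simp only [EReal.coe_sub_bot, top_le_iff, EReal.coe_ne_top, bot_le, true_imp_iff, false_iff,
      not_forall, not_le]
    exact ⟨q x - s - 1, by linarith⟩
  | coe r =>
    simp only [← EReal.coe_sub, EReal.coe_le_coe_iff]
    exact ⟨fun H t ht => by linarith, fun H => by linarith [H r le_rfl]⟩
  | top => simp

lemma convex_epiFn_conjFn (h : X → EReal) : Convex ℝ (epiFn (conjFn h)) := by
  rintro ⟨q₁, s₁⟩ h₁ ⟨q₂, s₂⟩ h₂ a b ha hb hab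
  have H₁ := conjFn_le_coe_iff.1 h₁
  have H₂ := conjFn_le_coe_iff.1 h₂
  refine conjFn_le_coe_iff.2 fun x t hxt => ?_
  change a * q₁ x + b * q₂ x ≤ a * s₁ + b * s₂ + t
  have ht : a * t + b * t = t := by rw [← add_mul, hab, one_mul]
  linarith [mul_le_mul_of_nonneg_left (H₁ x t hxt) ha, mul_le_mul_of_nonneg_left (H₂ x t hxt) hb]

lemma convex_domFn_conjFn (h : X → EReal) : Convex ℝ (domFn (conjFn h)) := by
  simpa [image_fst_epiFn] using (convex_epiFn_conjFn h).linear_image (LinearMap.fst ℝ _ ℝ)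

lemma conjFn_indicatorE_le_coe_iff {C : Set X} {q : WeakDual ℝ X} {s : ℝ} :
    conjFn (indicatorE C) q ≤ s ↔ ∀ x ∈ C, q x ≤ s := by
  refine conjFn_le_coe_iff.trans (forall_congr' fun x => ?_)
  by_cases hx : x ∈ C
  · simp only [indicatorE, if_pos hx, EReal.coe_nonneg]
    exact ⟨fun H _ => by simpa using H 0 le_rfl, fun H t ht => by linarith [H hx]⟩
  · simp [indicatorE, hx]

lemma mem_barCone_iff {C : Set X} {q : WeakDual ℝ X} :
    q ∈ barCone C ↔ ∃ s : ℝ, ∀ x ∈ C, q x ≤ s := by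
  simp only [barCone, mem_domFn_iff, conjFn_indicatorE_le_coe_iff]

lemma zero_mem_barCone (C : Set X) : (0 : WeakDual ℝ X) ∈ barCone C :=
  mem_barCone_iff.2 ⟨0, fun _ _ => le_rfl⟩

lemma smul_mem_barCone {C : Set X} {q : WeakDual ℝ X} (hq : q ∈ barCone C) {t : ℝ} (ht : 0 ≤ t) :
    t • q ∈ barCone C := by
  obtain ⟨M, hM⟩ := mem_barCone_iff.1 hq
  exact mem_barCone_iff.2 ⟨t * M, fun x hx => mul_le_mul_of_nonneg_left (hM x hx) ht⟩

lemma recFn_le_coe_iff {d : X} {r : ℝ} :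
    recFn h d ≤ r ↔ ∀ q ∈ domFn (conjFn h), q d ≤ r := by
  simp only [recFn, iSup₂_le_iff, EReal.coe_le_coe_iff]

lemma coe_le_recFn {q : WeakDual ℝ X} (hq : q ∈ domFn (conjFn h)) (d : X) :
    (q d : EReal) ≤ recFn h d :=
  le_iSup₂ (f := fun q (_ : q ∈ domFn (conjFn h)) => ((q d : ℝ) : EReal)) q hq

lemma epiFn_conjFn_eq_univ (h_top : ∀ x, h x = ⊤) : epiFn (conjFn h) = univ :=
  eq_univ_of_forall fun _ => conjFn_le_coe_iff.2 fun x t hxt => by simp [h_top x] at hxt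

end Conjugate

section Gamma

variable {h : X → EReal}

lemma InGamma.exists_eq_coe (hh : InGamma h) : ∃ (x : X) (m : ℝ), h x = m := by
  obtain ⟨x, hx⟩ := hh.2.1
  exact ⟨x, (h x).toReal, (EReal.coe_toReal hx (hh.1 x)).symm⟩

lemma InGamma.convex_epiFn (hh : InGamma h) : Convex ℝ (epiFn h) := hh.2.2.1

lemma InGamma.isClosed_epiFn (hh : InGamma h) : IsClosed (epiFn h) :=
  _root_.isClosed_epiFn hh.2.2.2

variable [IsTopologicalAddGroup X] [ContinuousSMul ℝ X] [LocallyConvexSpace ℝ X]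

theorem InGamma.exists_conjFn_le (hh : InGamma h) :
    ∃ (q : WeakDual ℝ X) (s : ℝ), conjFn h q ≤ s := by
  obtain ⟨x, m, hm⟩ := hh.exists_eq_coe
  obtain ⟨φ, u, hφ, -⟩ := (isEpigraphical_epiFn h).exists_nonvertical_separation
    hh.convex_epiFn hh.isClosed_epiFn (s₀ := m - 1) hm.le
    (by simp only [epiFn, mem_ofPred_eq, hm, EReal.coe_le_coe_iff, not_le]; linarith)
  refine ⟨StrongDual.toWeakDual φ, u, conjFn_le_coe_iff.2 fun y t hyt => ?_⟩
  linarith [hφ (y, t) hyt, StrongDual.toWeakDual_apply φ y]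

/-- Fenchel–Moreau: a function of `Γ(X)` is the supremum of its continuous affine minorants. -/
theorem InGamma.le_of_forall_conjFn_le (hh : InGamma h) {x : X} {r : ℝ}
    (H : ∀ (q : WeakDual ℝ X) (s : ℝ), conjFn h q ≤ s → q x ≤ s + r) : h x ≤ r := by
  by_contra hx
  obtain ⟨x₀, m, hm⟩ := hh.exists_eq_coe
  obtain ⟨φ, c, u, hc, hφ, hφx⟩ := (isEpigraphical_epiFn h).exists_separation hh.convex_epiFn
    hh.isClosed_epiFn ⟨(x₀, m), hm.le⟩ hx
  rcases hc.lt_or_eq with hc | rfl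
  · have hq := H (StrongDual.toWeakDual (c⁻¹ • φ)) (c⁻¹ * u) <|
      conjFn_le_coe_iff.2 fun y t hyt => by
      have := hφ (y, t) hyt
      rw [StrongDual.toWeakDual_apply, smul_apply, smul_eq_mul, ← mul_le_mul_iff_of_pos_left hc]
      field_simp
      linarith
    rw [StrongDual.toWeakDual_apply, smul_apply, smul_eq_mul,
      ← mul_le_mul_iff_of_pos_left hc] at hq
    field_simp at hq
    linarith
  · -- `φ` separates `x` from `dom h`; tilt an affine minorant of `h` along `φ`.
    simp only [zero_mul, sub_zero] at hφ hφx
    obtain ⟨q₀, s₀, hq₀⟩ := hh.exists_conjFn_le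
    suffices φ x - u ≤ 0 by linarith
    refine nonpos_of_forall_nat_lt (a := q₀ x - s₀ - r) (u := 1) fun n => ?_
    have hn := H (q₀ + (n : ℝ) • StrongDual.toWeakDual φ) (s₀ + n * u) <|
      conjFn_le_coe_iff.2 fun y t hyt => by
        change q₀ y + n * φ y ≤ s₀ + n * u + t
        nlinarith [conjFn_le_coe_iff.1 hq₀ y t hyt, hφ (y, t) hyt, (n.cast_nonneg : (0 : ℝ) ≤ n)]
    change q₀ x + n * φ x ≤ s₀ + n * u + r at hn
    linarith

end Gamma

section RecessionCone

variable {C : Set X} {d : X}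

lemma apply_nonpos_of_mem_recCone (hC : C.Nonempty) (hd : d ∈ recCone C) {q : WeakDual ℝ X}
    (hq : q ∈ barCone C) : q d ≤ 0 := by
  obtain ⟨a, ha⟩ := hC
  obtain ⟨M, hM⟩ := mem_barCone_iff.1 hq
  refine nonpos_of_forall_nat_lt (a := q a) (u := M + 1) fun n => ?_
  have := hM _ (mem_recCone_iff_add_smul_mem.1 hd a ha n n.cast_nonneg)
  rw [map_add, map_smul, smul_eq_mul] at this
  linarith

variable [IsTopologicalAddGroup X] [ContinuousSMul ℝ X] [LocallyConvexSpace ℝ X]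

lemma mem_of_forall_apply_le (hCcv : Convex ℝ C) (hCcl : IsClosed C) {x : X}
    (H : ∀ (φ : X →L[ℝ] ℝ) (s : ℝ), (∀ y ∈ C, φ y ≤ s) → φ x ≤ s) : x ∈ C := by
  by_contra hx
  obtain ⟨φ, u, hφ, hφx⟩ := geometric_hahn_banach_closed_point hCcv hCcl hx
  linarith [H φ u fun y hy => (hφ y hy).le]

lemma mem_recCone_of_forall_barCone (hCcv : Convex ℝ C) (hCcl : IsClosed C)
    (H : ∀ q ∈ barCone C, q d ≤ 0) : d ∈ recCone C := by
  refine mem_recCone_iff_add_smul_mem.2 fun a ha s hs =>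
    mem_of_forall_apply_le hCcv hCcl fun φ M hM => ?_
  have hφ : φ d ≤ 0 := H (StrongDual.toWeakDual φ) (mem_barCone_iff.2 ⟨M, hM⟩)
  rw [map_add, map_smul, smul_eq_mul]
  linarith [hM a ha, mul_nonpos_of_nonneg_of_nonpos hs hφ]

end RecessionCone

section CharacteristicCone

variable {I : Type*} {C : Set X} {f : I → X → EReal} {g : X → EReal}

lemma mk_zero_mem_charCone {t : ℝ} (ht : 0 ≤ t) : ((0 : WeakDual ℝ X), t) ∈ charCone C f :=
  subset_coneGen _ (Or.inl (conjFn_indicatorE_le_coe_iff.2 fun _ _ => ht))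

lemma add_mem_closure_epiFn_add_charCone {w k : WeakDual ℝ X × ℝ}
    (hw : w ∈ closure (epiFn (conjFn g) + charCone C f)) (hk : k ∈ charCone C f) :
    w + k ∈ closure (epiFn (conjFn g) + charCone C f) :=
  map_mem_closure (f := (· + k)) (continuous_add_const k) hw fun _ ⟨e, he, k', hk', hz⟩ =>
    ⟨e, he, k' + k, add_mem_coneGen hk' hk, by subst hz; exact (add_assoc e k' k).symm⟩

lemma isEpigraphical_closure_epiFn_add_charCone :
    IsEpigraphical (closure (epiFn (conjFn g) + charCone C f)) := fun q s t hs hst => by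
  simpa using add_mem_closure_epiFn_add_charCone hs (mk_zero_mem_charCone (sub_nonneg.2 hst))

lemma convex_closure_epiFn_add_charCone :
    Convex ℝ (closure (epiFn (conjFn g) + charCone C f)) :=
  ((convex_epiFn_conjFn g).add (convex_coneGen _)).closure

lemma domFn_add_coneGen_add_barCone_subset :
    domFn (conjFn g) + coneGen (⋃ i, domFn (conjFn (f i))) + barCone C ⊆
      Prod.fst '' (epiFn (conjFn g) + charCone C f) := by
  have hΩ : coneGen (⋃ i, domFn (conjFn (f i))) ⊆ Prod.fst '' charCone C f :=
    calc coneGen (⋃ i, domFn (conjFn (f i)))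
        = coneGen (LinearMap.fst ℝ _ ℝ '' ⋃ i, epiFn (conjFn (f i))) := by
          simp [image_iUnion, image_fst_epiFn]
      _ ⊆ LinearMap.fst ℝ _ ℝ '' coneGen (⋃ i, epiFn (conjFn (f i))) := coneGen_image_subset _ _
      _ ⊆ Prod.fst '' charCone C f := image_mono (coneGen_mono subset_union_right)
  have hbar : barCone C ⊆ Prod.fst '' charCone C f := by
    rw [barCone, ← image_fst_epiFn]
    exact image_mono (subset_union_left.trans (subset_coneGen _))
  rintro _ ⟨_, ⟨q₁, h₁, q₂, h₂, rfl⟩, q₃, h₃, rfl⟩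
  obtain ⟨s₁, hs₁⟩ := mem_domFn_iff.1 h₁
  obtain ⟨k₂, hk₂, rfl⟩ := hΩ h₂
  obtain ⟨k₃, hk₃, rfl⟩ := hbar h₃
  exact ⟨(q₁, s₁) + (k₂ + k₃), ⟨_, hs₁, _, add_mem_coneGen hk₂ hk₃, rfl⟩, by simp [add_assoc]⟩

lemma apply_fst_nonpos_of_mem_charCone (hC : C.Nonempty) {d : X} (hdC : d ∈ recCone C)
    (hdf : ∀ i, recFn (f i) d ≤ (0 : EReal)) {k : WeakDual ℝ X × ℝ} (hk : k ∈ charCone C f) :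
    k.1 d ≤ 0 := by
  have hlin : IsLinearMap ℝ fun k : WeakDual ℝ X × ℝ => k.1 d := ⟨fun _ _ => rfl, fun _ _ => rfl⟩
  refine coneGen_subset (convex_halfSpace_le hlin 0) hlin.map_zero.le (fun t ht k hk => ?_) ?_ hk
  · exact (hlin.map_smul t k).trans_le (mul_nonpos_of_nonneg_of_nonpos ht hk)
  rintro k (hk | hk)
  · exact apply_nonpos_of_mem_recCone hC hdC (mem_domFn_iff.2 ⟨k.2, hk⟩)
  · obtain ⟨i, hi⟩ := mem_iUnion.1 hk
    exact recFn_le_coe_iff.1 (hdf i) k.1 (mem_domFn_iff.2 ⟨k.2, hi⟩)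

theorem not_prod_univ_subset_closure_epiFn_add_charCone (hC : C.Nonempty) {d : X}
    (hdC : d ∈ recCone C) (hdf : ∀ i, recFn (f i) d ≤ (0 : EReal)) {p : WeakDual ℝ X}
    (hdg : recFn g d < ((p d : ℝ) : EReal)) :
    ¬ {p} ×ˢ univ ⊆ closure (epiFn (conjFn g) + charCone C f) := by
  have hW : closure (epiFn (conjFn g) + charCone C f) ⊆ {z | (z.1 d : EReal) ≤ recFn g d} := by
    refine closure_minimal ?_ (isClosed_le (continuous_coe_real_ereal.comp
      ((WeakDual.eval_continuous d).comp continuous_fst)) continuous_const)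
    rintro _ ⟨e, he, k, hk, rfl⟩
    calc (((e + k).1 d : ℝ) : EReal) ≤ (e.1 d : EReal) := EReal.coe_le_coe_iff.2 <| by
          linarith [apply_fst_nonpos_of_mem_charCone hC hdC hdf hk,
            show (e + k).1 d = e.1 d + k.1 d from rfl]
      _ ≤ recFn g d := coe_le_recFn (mem_domFn_iff.2 ⟨e.2, he⟩) d
  intro hsub
  exact (hW (hsub (show (p, (0 : ℝ)) ∈ {p} ×ˢ univ from ⟨mem_singleton p, mem_univ _⟩))).not_gt hdg

variable [IsTopologicalAddGroup X] [ContinuousSMul ℝ X] [LocallyConvexSpace ℝ X]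

lemma mem_solSet_of_forall_charCone (hCcv : Convex ℝ C) (hCcl : IsClosed C)
    (hf : ∀ i, InGamma (f i)) {x : X} (H : ∀ k ∈ charCone C f, k.1 x ≤ k.2) :
    x ∈ solSet C f := by
  refine ⟨mem_of_forall_apply_le hCcv hCcl fun φ s hφ => ?_, fun i => ?_⟩
  · exact H (StrongDual.toWeakDual φ, s)
      (subset_coneGen _ (Or.inl (conjFn_indicatorE_le_coe_iff.2 hφ)))
  · have := (hf i).le_of_forall_conjFn_le (x := x) (r := 0) fun q s hq => by
      simpa using H (q, s) (subset_coneGen _ (Or.inr (mem_iUnion.2 ⟨i, hq⟩)))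
    exact_mod_cast this

theorem mk_mem_closure_epiFn_add_charCone (hCcv : Convex ℝ C) (hCcl : IsClosed C)
    (hf : ∀ i, InGamma (f i)) (hg : InGamma g) (hA : solSet C f ∩ domFn g = ∅)
    {z : WeakDual ℝ X × ℝ} (hz : z ∈ closure (epiFn (conjFn g) + charCone C f)) (r : ℝ) :
    (z.1, r) ∈ closure (epiFn (conjFn g) + charCone C f) := by
  by_contra hr
  obtain ⟨φ, u, hφ, -⟩ := isEpigraphical_closure_epiFn_add_charCone.exists_nonvertical_separation
    convex_closure_epiFn_add_charCone isClosed_closure hz hr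
  obtain ⟨x, hx⟩ := WeakDual.exists_eq_apply φ
  have hgx : g x ≤ u := hg.le_of_forall_conjFn_le fun q s hqs => by
    have := hφ (q, s) (subset_closure ⟨(q, s), hqs, 0, zero_mem_coneGen _, add_zero _⟩)
    rw [hx] at this
    linarith
  have hxA : x ∈ solSet C f := mem_solSet_of_forall_charCone hCcv hCcl hf fun k hk => by
    suffices φ k.1 - k.2 ≤ 0 by rw [hx] at this; linarith
    refine nonpos_of_forall_nat_lt (a := φ z.1 - z.2) (u := u) fun n => ?_
    have := hφ _ (add_mem_closure_epiFn_add_charCone hz (smul_mem_coneGen n.cast_nonneg hk))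
    simp only [Prod.fst_add, Prod.snd_add, Prod.smul_fst, Prod.smul_snd, map_add, map_smul,
      smul_eq_mul] at this
    linarith
  exact (eq_empty_iff_forall_notMem.1 hA x) ⟨hxA, hgx.trans_lt (EReal.coe_lt_top u)⟩

theorem prod_univ_subset_closure_epiFn_add_charCone (hCcv : Convex ℝ C) (hCcl : IsClosed C)
    (hf : ∀ i, InGamma (f i)) (hg : InGamma g) (hA : solSet C f ∩ domFn g = ∅)
    {p : WeakDual ℝ X}
    (hp : p ∈ closure (domFn (conjFn g) + coneGen (⋃ i, domFn (conjFn (f i))) + barCone C)) :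
    {p} ×ˢ univ ⊆ closure (epiFn (conjFn g) + charCone C f) := by
  rintro ⟨_, r⟩ ⟨rfl, -⟩
  refine closure_minimal (fun q hq => ?_)
    (isClosed_closure.preimage (Continuous.prodMk_left r)) hp
  obtain ⟨k, hk, rfl⟩ := domFn_add_coneGen_add_barCone_subset hq
  exact mk_mem_closure_epiFn_add_charCone hCcv hCcl hf hg hA (subset_closure hk) r

theorem exists_recession_direction (hCcv : Convex ℝ C) (hCcl : IsClosed C) (hg : InGamma g)
    {p : WeakDual ℝ X}
    (hp : p ∉ closure (domFn (conjFn g) + coneGen (⋃ i, domFn (conjFn (f i))) + barCone C)) :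
    ∃ d ∈ (⋂ i, {x : X | recFn (f i) x ≤ (0 : EReal)}) ∩ recCone C,
      recFn g d < ((p d : ℝ) : EReal) := by
  have hconv := ((convex_domFn_conjFn g).add (convex_coneGen (⋃ i, domFn (conjFn (f i))))).add
    (convex_domFn_conjFn (indicatorE C))
  obtain ⟨φ, u, hφ, hφp⟩ := geometric_hahn_banach_closed_point hconv.closure isClosed_closure hp
  obtain ⟨d, hd⟩ := WeakDual.exists_eq_apply φ
  have hsum : ∀ q₁ ∈ domFn (conjFn g), ∀ q₂ ∈ coneGen (⋃ i, domFn (conjFn (f i))),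
      ∀ q₃ ∈ barCone C, φ q₁ + φ q₂ + φ q₃ < u := fun q₁ h₁ q₂ h₂ q₃ h₃ => by
    simpa using hφ _ (subset_closure ⟨_, ⟨q₁, h₁, q₂, h₂, rfl⟩, q₃, h₃, rfl⟩)
  obtain ⟨q₀, s₀, hq₀⟩ := hg.exists_conjFn_le
  have hq₀ : q₀ ∈ domFn (conjFn g) := mem_domFn_iff.2 ⟨s₀, hq₀⟩
  have hcone : ∀ q ∈ coneGen (⋃ i, domFn (conjFn (f i))), q d ≤ 0 := fun q hq => by
    refine hd q ▸ nonpos_of_forall_nat_lt (a := φ q₀) (u := u) fun n => ?_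
    simpa using hsum q₀ hq₀ _ (smul_mem_coneGen n.cast_nonneg hq) 0 (zero_mem_barCone C)
  have hbar : ∀ q ∈ barCone C, q d ≤ 0 := fun q hq => by
    refine hd q ▸ nonpos_of_forall_nat_lt (a := φ q₀) (u := u) fun n => ?_
    simpa using hsum q₀ hq₀ 0 (zero_mem_coneGen _) _ (smul_mem_barCone hq n.cast_nonneg)
  refine ⟨d, ⟨mem_iInter.2 fun i => recFn_le_coe_iff.2 fun q hq => ?_,
    mem_recCone_of_forall_barCone hCcv hCcl hbar⟩, ?_⟩
  · exact hcone q (subset_coneGen _ (mem_iUnion.2 ⟨i, hq⟩))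
  calc recFn g d ≤ u := recFn_le_coe_iff.2 fun q hq => by
        have := hsum q hq 0 (zero_mem_coneGen _) 0 (zero_mem_barCone C)
        rw [map_zero, add_zero, add_zero, hd] at this
        exact this.le
    _ < p d := by rw [← hd]; exact_mod_cast hφp

end CharacteristicCone

theorem stmt12_general [IsTopologicalAddGroup X] [ContinuousSMul ℝ X] [LocallyConvexSpace ℝ X] {I : Type*} (C : Set X) (hCne : C.Nonempty) (hCcl : IsClosed C) (hCcv : Convex ℝ C)
    (f : I → X → EReal) (hf : ∀ i, InGamma (f i))
    (g : X → EReal) (hg : InGamma g)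
    (hA : solSet C f ∩ domFn g = ∅) (p : WeakDual ℝ X) :
    [ epiFn (conjFn (fun x => g x + indicatorE (solSet C f) x)) ∩
          (({p} : Set (WeakDual ℝ X)) ×ˢ (Set.univ : Set ℝ)) ≠
        closure (epiFn (conjFn g) + charCone C f) ∩
          (({p} : Set (WeakDual ℝ X)) ×ˢ (Set.univ : Set ℝ)),
      ¬ (({p} : Set (WeakDual ℝ X)) ×ˢ (Set.univ : Set ℝ) ⊆
          closure (epiFn (conjFn g) + charCone C f)),
      p ∉ closure (domFn (conjFn g) + coneGen (⋃ i, domFn (conjFn (f i))) + barCone C),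
      ∃ d ∈ (⋂ i, {x : X | recFn (f i) x ≤ (0 : EReal)}) ∩ recCone C,
        recFn g d < ((p d : ℝ) : EReal) ].TFAE := by
  have hepi : epiFn (conjFn fun x => g x + indicatorE (solSet C f) x) = univ :=
    epiFn_conjFn_eq_univ (add_indicatorE_eq_top hg.1 hA)
  tfae_have 1 ↔ 2 := by rw [hepi, univ_inter, Ne, eq_comm, inter_eq_right]
  tfae_have 2 → 3 := fun h2 hp =>
    h2 (prod_univ_subset_closure_epiFn_add_charCone hCcv hCcl hf hg hA hp)
  tfae_have 3 → 4 := exists_recession_direction hCcv hCcl hg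
  tfae_have 4 → 2 := fun ⟨d, ⟨hdf, hdC⟩, hdg⟩ =>
    not_prod_univ_subset_closure_epiFn_add_charCone hCne hdC (fun i => mem_iInter.1 hdf i) hdg
  tfae_finish

/-- Theorem 4 (On the failure of the hidden assumption), equivalences (i)–(iv). -/
theorem stmt12 [IsTopologicalAddGroup X] [ContinuousSMul ℝ X] [LocallyConvexSpace ℝ X] [T2Space X] {I : Type*} (C : Set X) (hCne : C.Nonempty) (hCcl : IsClosed C) (hCcv : Convex ℝ C)
    (f : I → X → EReal) (hf : ∀ i, InGamma (f i))
    (g : X → EReal) (hg : InGamma g)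
    (hA : solSet C f ∩ domFn g = ∅) (p : WeakDual ℝ X) :
    [ epiFn (conjFn (fun x => g x + indicatorE (solSet C f) x)) ∩
          (({p} : Set (WeakDual ℝ X)) ×ˢ (Set.univ : Set ℝ)) ≠
        closure (epiFn (conjFn g) + charCone C f) ∩
          (({p} : Set (WeakDual ℝ X)) ×ˢ (Set.univ : Set ℝ)),
      ¬ (({p} : Set (WeakDual ℝ X)) ×ˢ (Set.univ : Set ℝ) ⊆
          closure (epiFn (conjFn g) + charCone C f)),
      p ∉ closure (domFn (conjFn g) + coneGen (⋃ i, domFn (conjFn (f i))) + barCone C),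
      ∃ d ∈ (⋂ i, {x : X | recFn (f i) x ≤ (0 : EReal)}) ∩ recCone C,
        recFn g d < ((p d : ℝ) : EReal) ].TFAE :=
  stmt12_general C hCne hCcl hCcv f hf g hg hA p
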